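/- Fix any direction (a,b) ∈ ℝ² and consider the vertex perturbation p_t = (1/2 + t·a, √3/2 + t·b) of the apex of the equilateral triangle with vertices (0,0), (1,0), (1/2, √3/2). Let A(t) := (√3/2 + t·b)/2 be the area and P(t) := 1 + √((1/2 + t·a)² + (√3/2 + t·b)²) + √((t·a − 1/2)² + (√3/2 + t·b)²) the perimeter of the triangle with vertices (0,0), (1,0), p_t. Then the function t ↦ (P(t) + √(4π·A(t)))²/(4·A(t)) is differentiable at t = 0 and its derivative there equals 0. -/

import Mathlib

/-- Area of the triangle with vertices `(0,0)`, `(1,0)`, `(1/2 + t a, √3/2 + t b)`. -/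
noncomputable def A10 (b t : ℝ) : ℝ := (Real.sqrt 3 / 2 + t * b) / 2

/-- Perimeter of the triangle with vertices `(0,0)`, `(1,0)`, `(1/2 + t a, √3/2 + t b)`. -/
noncomputable def P10 (a b t : ℝ) : ℝ :=
  1 + Real.sqrt ((1 / 2 + t * a) ^ 2 + (Real.sqrt 3 / 2 + t * b) ^ 2)
    + Real.sqrt ((t * a - 1 / 2) ^ 2 + (Real.sqrt 3 / 2 + t * b) ^ 2)

/-- The functional `(P + √(4πA))²/(4A)` is stationary at the equilateral triangle
under any vertex perturbation of the apex. -/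
theorem statement10 (a b : ℝ) :
    HasDerivAt
      (fun t => (P10 a b t + Real.sqrt (4 * Real.pi * A10 b t)) ^ 2 / (4 * A10 b t)) 0 0 := by
  have h3 : (0:ℝ) < Real.sqrt 3 := Real.sqrt_pos.mpr (by norm_num)
  have hs3 : Real.sqrt 3 ^ 2 = 3 := Real.sq_sqrt (by norm_num)
  have hpi := Real.pi_pos
  set s := Real.sqrt (Real.pi * Real.sqrt 3) with hsdef
  have hspos : 0 < s := Real.sqrt_pos.mpr (by positivity)
  have hs2 : s ^ 2 = Real.pi * Real.sqrt 3 := Real.sq_sqrt (by positivity)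
  -- area
  have hA : HasDerivAt (fun t => A10 b t) (b / 2) 0 := by
    have h : HasDerivAt (fun t : ℝ => (Real.sqrt 3 / 2 + t * b) / 2) ((1 * b) / 2) 0 :=
      (((hasDerivAt_id (0:ℝ)).mul_const b).const_add (Real.sqrt 3 / 2)).div_const 2
    simpa [A10] using h
  have hA0 : A10 b 0 = Real.sqrt 3 / 4 := by simp [A10]; ring
  -- first sqrt in P
  have hq1 : HasDerivAt (fun t : ℝ => (1/2 + t*a)^2 + (Real.sqrt 3/2 + t*b)^2)
      (a + Real.sqrt 3 * b) 0 := by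
    have h1 := ((((hasDerivAt_id (0:ℝ)).mul_const a).const_add (1/2)).pow 2)
    have h2 := ((((hasDerivAt_id (0:ℝ)).mul_const b).const_add (Real.sqrt 3/2)).pow 2)
    have h := h1.add h2
    refine h.congr_deriv ?_
    simp only [id_eq, zero_mul, add_zero, pow_one, one_mul, mul_zero, sub_zero]
    ring
  have hq10 : (1/2 + (0:ℝ)*a)^2 + (Real.sqrt 3/2 + 0*b)^2 = 1 := by
    nlinarith [hs3]
  have hP1 : HasDerivAt (fun t : ℝ => Real.sqrt ((1/2 + t*a)^2 + (Real.sqrt 3/2 + t*b)^2))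
      ((a + Real.sqrt 3 * b) / 2) 0 := by
    have h := hq1.sqrt (by rw [hq10]; norm_num)
    rw [hq10] at h
    simpa using h
  -- second sqrt in P
  have hq2 : HasDerivAt (fun t : ℝ => (t*a - 1/2)^2 + (Real.sqrt 3/2 + t*b)^2)
      (-a + Real.sqrt 3 * b) 0 := by
    have h1 := ((((hasDerivAt_id (0:ℝ)).mul_const a).sub_const (1/2)).pow 2)
    have h2 := ((((hasDerivAt_id (0:ℝ)).mul_const b).const_add (Real.sqrt 3/2)).pow 2)
    have h := h1.add h2
    refine h.congr_deriv ?_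
    simp only [id_eq, zero_mul, add_zero, pow_one, one_mul, mul_zero, zero_sub, sub_zero]
    ring
  have hq20 : ((0:ℝ)*a - 1/2)^2 + (Real.sqrt 3/2 + 0*b)^2 = 1 := by
    nlinarith [hs3]
  have hP2 : HasDerivAt (fun t : ℝ => Real.sqrt ((t*a - 1/2)^2 + (Real.sqrt 3/2 + t*b)^2))
      ((-a + Real.sqrt 3 * b) / 2) 0 := by
    have h := hq2.sqrt (by rw [hq20]; norm_num)
    rw [hq20] at h
    simpa using h
  -- perimeter
  have hP : HasDerivAt (fun t => P10 a b t) (Real.sqrt 3 * b) 0 := by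
    have h := (hP1.const_add 1).add hP2
    have he : (a + Real.sqrt 3 * b) / 2 + (-a + Real.sqrt 3 * b) / 2 = Real.sqrt 3 * b := by ring
    rw [he] at h
    exact h
  have hP0 : P10 a b 0 = 3 := by
    unfold P10
    rw [hq10, hq20]
    norm_num
  -- sqrt(4πA)
  have hS : HasDerivAt (fun t => Real.sqrt (4 * Real.pi * A10 b t))
      (Real.pi * b / s) 0 := by
    have hin : HasDerivAt (fun t => 4 * Real.pi * A10 b t) (4 * Real.pi * (b/2)) 0 :=
      hA.const_mul _
    have h40 : 4 * Real.pi * A10 b 0 = Real.pi * Real.sqrt 3 := by rw [hA0]; ring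
    have h := hin.sqrt (by rw [h40]; positivity)
    rw [h40] at h
    convert h using 1
    rw [← hsdef]
    field_simp
    ring
  -- combine
  have hsum : HasDerivAt (fun t => P10 a b t + Real.sqrt (4 * Real.pi * A10 b t))
      (Real.sqrt 3 * b + Real.pi * b / s) 0 := hP.add hS
  have hden : HasDerivAt (fun t => 4 * A10 b t) (4 * (b/2)) 0 := hA.const_mul 4
  have hden0 : 4 * A10 b 0 ≠ 0 := by rw [hA0]; positivity
  have h := (hsum.pow 2).div hden hden0
  refine h.congr_deriv ?_
  simp only [Pi.pow_apply]
  symm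
  rw [hA0, hP0, show 4 * Real.pi * (Real.sqrt 3 / 4) = Real.pi * Real.sqrt 3 by ring, ← hsdef]
  push_cast
  have hpi' : Real.pi = s ^ 2 / Real.sqrt 3 := by
    rw [hs2]; field_simp
  rw [hpi']
  rw [eq_div_iff (by positivity)]
  field_simp
  ring_nf
  linear_combination (-4 * s * b - 12 * b) * hs3
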